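/- Every language in PostS is stochastic: if L ⊆ Σ* is recognized with some error bound ε < 1/2 by an RT-PostPFA, then there exists an RT-PFA whose acceptance probability exceeds 1/2 exactly on the members of L, i.e. L ∈ S with cutpoint 1/2. -/

import Mathlib

noncomputable section

/-- The input alphabet extended with the two endmarkers `¢` and `$`. -/
inductive ESym (α : Type) : Type where
  | cent : ESym α
  | dollar : ESym α
  | letter : α → ESym α

/-- The state distribution obtained by applying, in order, the matrices for
`¢`, the letters of `w`, and `$` to the standard basis vector at the initial state `0`. -/
def pRun {α : Type} {n : ℕ} (A : ESym α → Matrix (Fin (n + 1)) (Fin (n + 1)) ℝ)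
    (w : List α) : Fin (n + 1) → ℝ :=
  (ESym.cent :: (w.map ESym.letter ++ [ESym.dollar])).foldl
    (fun v σ => (A σ).mulVec v) (Pi.single 0 1)

/-- A real-time probabilistic finite automaton with postselection (RT-PostPFA). -/
structure PostPFA (α : Type) where
  n : ℕ
  A : ESym α → Matrix (Fin (n + 1)) (Fin (n + 1)) ℝ
  nonneg : ∀ σ i j, 0 ≤ A σ i j
  colSum : ∀ σ j, ∑ i, A σ i j = 1
  Qpa : Finset (Fin (n + 1))
  Qpr : Finset (Fin (n + 1))
  disj : Disjoint Qpa Qpr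
  postPos : ∀ w : List α,
    0 < (∑ i ∈ Qpa, pRun A w i) + (∑ i ∈ Qpr, pRun A w i)

/-- Acceptance probability before postselection. -/
def PostPFA.pacc {α : Type} (M : PostPFA α) (w : List α) : ℝ :=
  ∑ i ∈ M.Qpa, pRun M.A w i

/-- Rejection probability before postselection. -/
def PostPFA.prej {α : Type} (M : PostPFA α) (w : List α) : ℝ :=
  ∑ i ∈ M.Qpr, pRun M.A w i

/-- Normalized acceptance probability of an RT-PostPFA. -/
def PostPFA.fa {α : Type} (M : PostPFA α) (w : List α) : ℝ :=
  M.pacc w / (M.pacc w + M.prej w)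

/-- Recognition of a language with error bound `ε`. -/
def PostPFA.Recognizes {α : Type} (M : PostPFA α) (L : Set (List α)) (ε : ℝ) : Prop :=
  ∀ w : List α, (w ∈ L → 1 - ε ≤ M.fa w) ∧ (w ∉ L → M.fa w ≤ ε)

/-- The class of languages recognized by RT-PostPFAs with bounded error. -/
def PostS {α : Type} (L : Set (List α)) : Prop :=
  ∃ (M : PostPFA α) (ε : ℝ), 0 ≤ ε ∧ ε < 1 / 2 ∧ M.Recognizes L ε

/-- Recognition with zero error: `fa = 1` on members, `fa = 0` on non-members. -/
def PostPFA.RecognizesZero {α : Type} (M : PostPFA α) (L : Set (List α)) : Prop :=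
  ∀ w : List α, (w ∈ L → M.fa w = 1) ∧ (w ∉ L → M.fa w = 0)

/-- The class of languages recognized by RT-PostPFAs with zero error. -/
def ZPostS {α : Type} (L : Set (List α)) : Prop :=
  ∃ M : PostPFA α, M.RecognizesZero L

/-- A standard real-time probabilistic finite automaton (RT-PFA). -/
structure PFA (α : Type) where
  n : ℕ
  A : ESym α → Matrix (Fin (n + 1)) (Fin (n + 1)) ℝ
  nonneg : ∀ σ i j, 0 ≤ A σ i j
  colSum : ∀ σ j, ∑ i, A σ i j = 1
  Qa : Finset (Fin (n + 1))

/-- Acceptance probability of an RT-PFA. -/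
def PFA.fa {α : Type} (M : PFA α) (w : List α) : ℝ :=
  ∑ i ∈ M.Qa, pRun M.A w i

/-!
Keep the transition matrices of the postselection automaton, but after the right end-marker
move all postselected-accepting mass to a state `a`, all postselected-rejecting mass to a state
`r ≠ a`, and split the remaining mass evenly between `a` and `r`. The resulting automaton accepts
with probability `(1 + pᵃ(w) - pʳ(w)) / 2`, which exceeds `1/2` exactly when `pʳ(w) < pᵃ(w)`,
i.e. exactly when `fᵃ(w) > 1/2`; with error `ε < 1/2` this happens exactly on `L`.
Distinct `a`, `r` exist unless one of the postselection sets is empty; but then `fᵃ` is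
constantly `0` (resp. `1`), which the unmodified automaton with no (resp. all) accepting states
reproduces.
-/

open Matrix Finset

section ColStochastic

variable {ι : Type*} [Fintype ι] [DecidableEq ι]

theorem Matrix.sum_foldl_mulVec_of_mem_colStochastic {κ : Type*} {A : κ → Matrix ι ι ℝ}
    (hA : ∀ σ, A σ ∈ colStochastic ℝ ι) (l : List κ) (v : ι → ℝ) :
    ∑ i, l.foldl (fun v σ => A σ *ᵥ v) v i = ∑ i, v i := by
  induction l generalizing v with
  | nil => rfl
  | cons σ l ih => rw [List.foldl_cons, ih, sum_mulVec_of_mem_colStochastic (hA σ)]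

def biasedCoinMatrix (s : ι → ℝ) (a r : ι) : Matrix ι ι ℝ :=
  Matrix.of fun i j =>
    ((Pi.single a (1 + s j) : ι → ℝ) i + (Pi.single r (1 - s j) : ι → ℝ) i) / 2

theorem biasedCoinMatrix_mem_colStochastic {s : ι → ℝ} (hs : ∀ j, |s j| ≤ 1) (a r : ι) :
    biasedCoinMatrix s a r ∈ colStochastic ℝ ι := by
  refine mem_colStochastic_iff_sum.2 ⟨fun i j => ?_, fun j => ?_⟩
  · obtain ⟨h₁, h₂⟩ := abs_le.1 (hs j)
    simp only [biasedCoinMatrix, of_apply, Pi.single_apply]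
    split_ifs <;> linarith
  · simp only [biasedCoinMatrix, of_apply, ← sum_div, sum_add_distrib, sum_pi_single']
    simp

theorem biasedCoinMatrix_mulVec_apply_left (s v : ι → ℝ) {a r : ι} (h : a ≠ r) :
    (biasedCoinMatrix s a r *ᵥ v) a = (∑ j, v j + s ⬝ᵥ v) / 2 := by
  simp only [biasedCoinMatrix, mulVec, dotProduct, of_apply, Pi.single_eq_same,
    Pi.single_eq_of_ne h, add_zero, sum_div, ← sum_add_distrib]
  exact sum_congr rfl fun j _ => by ring

end ColStochastic

section Run

variable {α : Type} {n : ℕ}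

theorem sum_pRun_of_mem_colStochastic {A : ESym α → Matrix (Fin (n + 1)) (Fin (n + 1)) ℝ}
    (hA : ∀ σ, A σ ∈ colStochastic ℝ (Fin (n + 1))) (w : List α) :
    ∑ i, pRun A w i = 1 := by
  rw [pRun, sum_foldl_mulVec_of_mem_colStochastic hA]
  simp

def postcomposeDollar (B : Matrix (Fin (n + 1)) (Fin (n + 1)) ℝ)
    (A : ESym α → Matrix (Fin (n + 1)) (Fin (n + 1)) ℝ) :
    ESym α → Matrix (Fin (n + 1)) (Fin (n + 1)) ℝ
  | .dollar => B * A .dollar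
  | σ => A σ

theorem postcomposeDollar_mem_colStochastic {B : Matrix (Fin (n + 1)) (Fin (n + 1)) ℝ}
    {A : ESym α → Matrix (Fin (n + 1)) (Fin (n + 1)) ℝ}
    (hB : B ∈ colStochastic ℝ (Fin (n + 1))) (hA : ∀ σ, A σ ∈ colStochastic ℝ (Fin (n + 1))) :
    ∀ σ, postcomposeDollar B A σ ∈ colStochastic ℝ (Fin (n + 1))
  | .dollar => Submonoid.mul_mem _ hB (hA _)
  | .cent => hA _
  | .letter _ => hA _

theorem pRun_postcomposeDollar (B : Matrix (Fin (n + 1)) (Fin (n + 1)) ℝ)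
    (A : ESym α → Matrix (Fin (n + 1)) (Fin (n + 1)) ℝ) (w : List α) :
    pRun (postcomposeDollar B A) w = B *ᵥ pRun A w := by
  simp only [pRun, List.foldl_cons, List.foldl_append, List.foldl_map, List.foldl_nil,
    mulVec_mulVec]
  rfl

end Run

namespace PostPFA

variable {α : Type} (M : PostPFA α)

theorem mem_colStochastic (σ : ESym α) : M.A σ ∈ colStochastic ℝ (Fin (M.n + 1)) :=
  mem_colStochastic_iff_sum.2 ⟨M.nonneg σ, M.colSum σ⟩

theorem Recognizes.eq_setOf_half_lt_fa {M : PostPFA α} {L : Set (List α)} {ε : ℝ}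
    (hM : M.Recognizes L ε) (hε : ε < 1 / 2) : L = {w | 1 / 2 < M.fa w} := by
  ext w
  refine ⟨fun hw => show 1 / 2 < M.fa w by linarith [(hM w).1 hw], fun hw => ?_⟩
  by_contra hw'
  linarith [(hM w).2 hw', show 1 / 2 < M.fa w from hw]

theorem pacc_add_prej_pos (w : List α) : 0 < M.pacc w + M.prej w :=
  M.postPos w

theorem half_lt_fa_iff (w : List α) : 1 / 2 < M.fa w ↔ M.prej w < M.pacc w := by
  rw [fa, lt_div_iff₀ (M.pacc_add_prej_pos w)]
  constructor <;> intro h <;> linarith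

theorem fa_eq_zero_of_Qpa_eq_empty (h : M.Qpa = ∅) (w : List α) : M.fa w = 0 := by
  simp [fa, pacc, h]

theorem fa_eq_one_of_Qpr_eq_empty (h : M.Qpr = ∅) (w : List α) : M.fa w = 1 := by
  have hprej : M.prej w = 0 := by simp [prej, h]
  have hpos := M.pacc_add_prej_pos w
  rw [hprej, add_zero] at hpos
  rw [fa, hprej, add_zero, div_self hpos.ne']

def withAccepting (Q : Finset (Fin (M.n + 1))) : PFA α :=
  ⟨M.n, M.A, M.nonneg, M.colSum, Q⟩

theorem withAccepting_empty_fa (w : List α) : (M.withAccepting ∅).fa w = 0 := by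
  simp [withAccepting, PFA.fa]

theorem withAccepting_univ_fa (w : List α) : (M.withAccepting univ).fa w = 1 :=
  sum_pRun_of_mem_colStochastic M.mem_colStochastic w

def postselectionBias (j : Fin (M.n + 1)) : ℝ :=
  (if j ∈ M.Qpa then 1 else 0) - (if j ∈ M.Qpr then 1 else 0)

theorem abs_postselectionBias_le_one (j : Fin (M.n + 1)) : |M.postselectionBias j| ≤ 1 := by
  unfold postselectionBias
  split_ifs <;> norm_num

theorem postselectionBias_dotProduct_pRun (w : List α) :
    M.postselectionBias ⬝ᵥ pRun M.A w = M.pacc w - M.prej w := by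
  simp only [postselectionBias, dotProduct, sub_mul, ite_mul, one_mul, zero_mul,
    sum_sub_distrib, sum_ite_mem, univ_inter, pacc, prej]

def toPFA (a r : Fin (M.n + 1)) : PFA α where
  n := M.n
  A := postcomposeDollar (biasedCoinMatrix M.postselectionBias a r) M.A
  nonneg σ _ _ := nonneg_of_mem_colStochastic <| postcomposeDollar_mem_colStochastic
    (biasedCoinMatrix_mem_colStochastic M.abs_postselectionBias_le_one a r) M.mem_colStochastic σ
  colSum σ := sum_col_of_mem_colStochastic <| postcomposeDollar_mem_colStochastic
    (biasedCoinMatrix_mem_colStochastic M.abs_postselectionBias_le_one a r) M.mem_colStochastic σ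
  Qa := {a}

theorem toPFA_fa {a r : Fin (M.n + 1)} (h : a ≠ r) (w : List α) :
    (M.toPFA a r).fa w = (1 + M.pacc w - M.prej w) / 2 := by
  simp only [toPFA, PFA.fa, sum_singleton, pRun_postcomposeDollar,
    biasedCoinMatrix_mulVec_apply_left _ _ h, postselectionBias_dotProduct_pRun,
    sum_pRun_of_mem_colStochastic M.mem_colStochastic]
  ring

end PostPFA

theorem PostS_subset_S_general {α : Type} (L : Set (List α)) (hL : PostS L) :
    ∃ M : PFA α, L = {w : List α | 1 / 2 < M.fa w} := by
  obtain ⟨M, ε, -, hε, hM⟩ := hL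
  rw [hM.eq_setOf_half_lt_fa hε]
  obtain hPa | ⟨a, ha⟩ := M.Qpa.eq_empty_or_nonempty
  · exact ⟨M.withAccepting ∅, by simp [M.withAccepting_empty_fa, M.fa_eq_zero_of_Qpa_eq_empty hPa]⟩
  obtain hPr | ⟨r, hr⟩ := M.Qpr.eq_empty_or_nonempty
  · exact ⟨M.withAccepting univ, by simp [M.withAccepting_univ_fa, M.fa_eq_one_of_Qpr_eq_empty hPr]⟩
  have har : a ≠ r := fun h => disjoint_left.1 M.disj ha (h ▸ hr)
  refine ⟨M.toPFA a r, Set.ext fun w => ?_⟩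
  simp only [Set.mem_ofPred_eq, M.half_lt_fa_iff, M.toPFA_fa har]
  constructor <;> intro h <;> linarith

/-- Every language in `PostS` is stochastic: it is recognized by some RT-PFA
with (strict) cutpoint `1/2`. -/
theorem PostS_subset_S {α : Type} [Fintype α] (L : Set (List α)) (hL : PostS L) :
    ∃ M : PFA α, L = {w : List α | 1 / 2 < M.fa w} :=
  PostS_subset_S_general L hL
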